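/- There is an absolute constant C > 0 such that for every integer d ≥ 1 the following holds. Each of the four range spaces on ground set ℝ^d whose ranges are, respectively, all Euclidean balls B_r(p), all stadiums D_r([s,t]), all cylinders C_r([s,t]), and all capped cylinders R_r([s,t]) (over all p, s, t ∈ ℝ^d with s ≠ t and all r > 0) has VC dimension at most C·d²: every finite subset of ℝ^d shattered by one of these families has cardinality at most C·d². The same bound C·d² holds for each of the corresponding dual range spaces, in which the ground set is the set of parameter tuples defining the shapes and the range indexed by a point x ∈ ℝ^d consists of all shapes containing x. -/

import Mathlib

/-!
Membership in each shape is a fixed Boolean formula in the signs of seven functions of the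
point `x` which are quadratic polynomials in the coordinates of `x`, with
coefficients depending on the parameters `θ` of the shape. For fixed `θ` these functions lie in
the `(d + 1) ^ 2`-dimensional space of quadratic polynomials; for fixed `x`, expanding in a basis
of that space, they lie in a space of functions of `θ` of dimension at most `7 (d + 1) ^ 2`.
So the primal and the dual range spaces both consist of Boolean combinations of seven sets
`{f ≥ 0}` with `f` in a space `V` of dimension `m = O(d ^ 2)`. By Dudley's theorem these sets
have VC dimension at most `m`, so by Sauer–Shelah they cut at most
`∑_{i ≤ m} (n choose i) ≤ (e (n + m) / m) ^ m` subsets out of `n` points, and the Boolean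
combinations at most `2 ^ 2 ^ 7 (e (n + m) / m) ^ (7 m)`. A shattered set of `n` points needs
`2 ^ n` of them, which forces `n ≤ 250 m`.
-/

open RealInnerProductSpace

/-- A finite set `Y` is shattered by the family of ranges `R` if every subset of `Y`
can be realized as the intersection of `Y` with some range in `R`. -/
def Shatters {X : Type*} (R : Set (Set X)) (Y : Finset X) : Prop :=
  ∀ A ⊆ Y, ∃ B ∈ R, ∀ y ∈ Y, y ∈ B ↔ y ∈ A

/-- The line through `s` and `t` (supporting the segment from `s` to `t`). -/
def lineThrough {d : ℕ} (s t : EuclideanSpace ℝ (Fin d)) :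
    Set (EuclideanSpace ℝ (Fin d)) :=
  {p | ∃ x : ℝ, p = s + x • (t - s)}

/-- The stadium of radius `r` around the segment `[s, t]`:
the closed `r`-neighborhood of the segment. -/
def stadium {d : ℕ} (s t : EuclideanSpace ℝ (Fin d)) (r : ℝ) :
    Set (EuclideanSpace ℝ (Fin d)) :=
  Metric.cthickening r (segment ℝ s t)

/-- The (infinite) cylinder of radius `r` around the line supporting the segment `[s, t]`. -/
def cylinder {d : ℕ} (s t : EuclideanSpace ℝ (Fin d)) (r : ℝ) :
    Set (EuclideanSpace ℝ (Fin d)) :=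
  {x | ∃ p ∈ lineThrough s t, ‖x - p‖ ≤ r}

/-- The capped cylinder of radius `r` around the segment `[s, t]`. -/
def cappedCylinder {d : ℕ} (s t : EuclideanSpace ℝ (Fin d)) (r : ℝ) :
    Set (EuclideanSpace ℝ (Fin d)) :=
  {x | ∃ p ∈ segment ℝ s t, ∃ u : EuclideanSpace ℝ (Fin d),
      ‖u‖ ≤ r ∧ ⟪t - s, u⟫ = 0 ∧ x = p + u}

open Module Submodule

theorem Shatters.mono {X : Type*} {R R' : Set (Set X)} {Y : Finset X} (hY : Shatters R Y)
    (h : R ⊆ R') : Shatters R' Y := fun A hA =>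
  let ⟨B, hB, hBA⟩ := hY A hA
  ⟨B, h hB, hBA⟩

section SignPatterns

variable {α Θ : Type*}

def nonnegSets (V : Submodule ℝ (α → ℝ)) : Set (Set α) :=
  {S | ∃ f ∈ V, S = {x | 0 ≤ f x}}

theorem nonneg_of_forall_sum_mul_eq_zero {V : Submodule ℝ (α → ℝ)} {Y : Finset α}
    (hY : Shatters (nonnegSets V) Y) (g : Y → ℝ) (hg : ∀ f ∈ V, ∑ y, g y * f y = 0) (y : Y) :
    0 ≤ g y := by
  classical
  obtain ⟨_, ⟨f, hfV, rfl⟩, hf⟩ :=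
    hY (({z | 0 ≤ g z} : Finset Y).map (Function.Embedding.subtype _)) fun x hx => by
      obtain ⟨z, -, rfl⟩ := Finset.mem_map.1 hx
      exact z.2
  have hsign (z : Y) : 0 ≤ f z ↔ 0 ≤ g z := by simpa using hf z z.2
  have hneg (z : Y) (hz : g z < 0) : f z < 0 := not_le.1 fun h => hz.not_ge ((hsign z).1 h)
  have hterm (z : Y) : 0 ≤ g z * f z := by
    rcases le_or_gt 0 (g z) with hz | hz
    · exact mul_nonneg hz ((hsign z).2 hz)
    · exact mul_nonneg_of_nonpos_of_nonpos hz.le (hneg z hz).le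
  by_contra! hy
  have := Finset.sum_pos' (fun z _ => hterm z)
    ⟨y, Finset.mem_univ _, mul_pos_of_neg_of_neg hy (hneg y hy)⟩
  linarith [hg f hfV]

/-- Dudley's theorem. -/
theorem card_le_finrank_of_shatters_nonnegSets {V : Submodule ℝ (α → ℝ)} [FiniteDimensional ℝ V]
    {Y : Finset α} (hY : Shatters (nonnegSets V) Y) : Y.card ≤ finrank ℝ V := by
  let ev (y : Y) : Dual ℝ V := (LinearMap.proj (y : α)).comp V.subtype
  have hev : LinearIndependent ℝ ev := by
    refine Fintype.linearIndependent_iff.2 fun g hg y => ?_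
    have hnonneg (g' : Y → ℝ) (hg' : ∀ f ∈ V, ∑ y, g' y * f y = 0) : 0 ≤ g' y :=
      nonneg_of_forall_sum_mul_eq_zero hY g' hg' y
    have hg' : ∀ f ∈ V, ∑ y, g y * f y = 0 := fun f hf => by
      simpa [ev] using LinearMap.congr_fun hg ⟨f, hf⟩
    refine le_antisymm ?_ (hnonneg g hg')
    simpa using hnonneg (-g) fun f hf => by simpa [neg_mul] using hg' f hf
  simpa [Subspace.dual_finrank_eq] using hev.fintype_card_le_finrank

open scoped Classical in
noncomputable def traces (L : Set (Set α)) (Y : Finset α) : Finset (Finset α) :=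
  Y.powerset.filter fun T => ∃ S ∈ L, ∀ y ∈ Y, y ∈ T ↔ y ∈ S

/-- The Sauer–Shelah lemma. -/
theorem card_traces_le {L : Set (Set α)} {m : ℕ} (hL : ∀ Z, Shatters L Z → Z.card ≤ m)
    (Y : Finset α) : (traces L Y).card ≤ ∑ i ∈ Finset.range (m + 1), Y.card.choose i := by
  classical
  have hsub : (traces L Y).shatterer ⊆ (Finset.range (m + 1)).biUnion Y.powersetCard := by
    intro Z hZ
    rw [Finset.mem_shatterer] at hZ
    obtain ⟨T, hT, hZT⟩ := hZ.exists_superset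
    have hZY : Z ⊆ Y := hZT.trans (Finset.mem_powerset.1 (Finset.mem_filter.1 hT).1)
    have hLZ : Shatters L Z := fun A hA => by
      obtain ⟨T, hT, rfl⟩ := hZ.subset_iff.1 hA
      obtain ⟨S, hS, hTS⟩ := (Finset.mem_filter.1 hT).2
      exact ⟨S, hS, fun y hy => by simp [hy, hTS y (hZY hy)]⟩
    simp only [Finset.mem_biUnion, Finset.mem_range, Finset.mem_powersetCard]
    exact ⟨Z.card, Nat.lt_succ_of_le (hL Z hLZ), hZY, rfl⟩
  calc (traces L Y).card ≤ (traces L Y).shatterer.card := Finset.card_le_card_shatterer _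
    _ ≤ ((Finset.range (m + 1)).biUnion Y.powersetCard).card := Finset.card_le_card hsub
    _ ≤ ∑ i ∈ Finset.range (m + 1), (Y.powersetCard i).card := Finset.card_biUnion_le
    _ = ∑ i ∈ Finset.range (m + 1), Y.card.choose i := by simp [Finset.card_powersetCard]

def IsSignPatternFamily (V : Submodule ℝ (α → ℝ)) (k : ℕ) (S : Θ → Set α) : Prop :=
  ∃ (Φ : (Fin k → Bool) → Bool) (g : Θ → Fin k → α → ℝ), (∀ θ i, g θ i ∈ V) ∧
    ∀ θ x, x ∈ S θ ↔ Φ (fun i => decide (0 ≤ g θ i x)) = true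

namespace IsSignPatternFamily

variable {V : Submodule ℝ (α → ℝ)} {k : ℕ} {S : Θ → Set α}

theorem two_pow_card_le (hS : IsSignPatternFamily V k S) {Y : Finset α}
    (hY : Shatters (Set.range S) Y) :
    2 ^ Y.card ≤ 2 ^ 2 ^ k * (traces (nonnegSets V) Y).card ^ k := by
  classical
  obtain ⟨Φ, g, hgV, hmem⟩ := hS
  -- a trace of `S θ` is recovered from `Φ` and the traces of the `k` sets `{0 ≤ g θ i}`
  let recover (p : ((Fin k → Bool) → Bool) × (Fin k → Finset α)) : Finset α :=
    Y.filter fun y => p.1 (fun i => decide (y ∈ p.2 i))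
  have hsurj : Y.powerset ⊆ (Finset.univ ×ˢ
      Fintype.piFinset fun _ => traces (nonnegSets V) Y).image recover := by
    intro A hA
    obtain ⟨_, ⟨θ, rfl⟩, hθ⟩ := hY A (Finset.mem_powerset.1 hA)
    refine Finset.mem_image.2 ⟨(Φ, fun i => Y.filter fun y => 0 ≤ g θ i y), ?_, ?_⟩
    · simp only [Finset.mem_product, Finset.mem_univ, Fintype.mem_piFinset, true_and]
      refine fun i => Finset.mem_filter.2 ⟨Finset.mem_powerset.2 (Finset.filter_subset _ _), ?_⟩
      exact ⟨_, ⟨g θ i, hgV θ i, rfl⟩, fun y hy => by simp [hy]⟩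
    · ext y
      simp only [recover, Finset.mem_filter]
      constructor
      · rintro ⟨hy, hΦ⟩
        exact (hθ y hy).1 ((hmem θ y).2 (by simpa [hy] using hΦ))
      · intro hy
        have hyY := Finset.mem_powerset.1 hA hy
        exact ⟨hyY, by simpa [hyY] using (hmem θ y).1 ((hθ y hyY).2 hy)⟩
  calc 2 ^ Y.card = Y.powerset.card := (Finset.card_powerset Y).symm
    _ ≤ _ := (Finset.card_le_card hsurj).trans Finset.card_image_le
    _ = _ := by simp [Finset.card_product, Fintype.card_piFinset]

theorem dual [FiniteDimensional ℝ V] (hS : IsSignPatternFamily V k S) :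
    ∃ V' : Submodule ℝ (Θ → ℝ), FiniteDimensional ℝ V' ∧ finrank ℝ V' ≤ k * finrank ℝ V ∧
      IsSignPatternFamily V' k fun x => {θ | x ∈ S θ} := by
  obtain ⟨Φ, g, hgV, hmem⟩ := hS
  let b := Module.finBasis ℝ V
  let c (q : Fin k × Fin (finrank ℝ V)) (θ : Θ) : ℝ := b.repr ⟨g θ q.1, hgV θ q.1⟩ q.2
  refine ⟨span ℝ (Set.range c), FiniteDimensional.span_of_finite ℝ (Set.finite_range c),
    (finrank_range_le_card c).trans (by simp), Φ, fun x i θ => g θ i x, fun x i => ?_,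
    fun x θ => hmem θ x⟩
  have hexp : (fun θ => g θ i x) = ∑ j, (b j : α → ℝ) x • c (i, j) := by
    ext θ
    have h := congrArg (fun f : V => (f : α → ℝ) x) (b.sum_repr ⟨g θ i, hgV θ i⟩)
    simp only [Submodule.coe_sum, Submodule.coe_smul, Finset.sum_apply, Pi.smul_apply,
      smul_eq_mul] at h
    simp only [Finset.sum_apply, Pi.smul_apply, smul_eq_mul, c, ← h, mul_comm]
  change (fun θ => g θ i x) ∈ _
  rw [hexp]
  exact sum_mem fun j _ => smul_mem _ _ (subset_span ⟨(i, j), rfl⟩)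

end IsSignPatternFamily

end SignPatterns

section Arithmetic

open Real

theorem Nat.sum_range_choose_le_add_choose (n m : ℕ) :
    ∑ i ∈ Finset.range (m + 1), n.choose i ≤ (n + m).choose m := by
  rw [Nat.add_choose_eq, Finset.Nat.sum_antidiagonal_eq_sum_range_succ_mk]
  exact Finset.sum_le_sum fun i _ => Nat.le_mul_of_pos_right _ (Nat.choose_pos (Nat.sub_le m i))

theorem add_choose_le_exp_mul_pow (n : ℕ) {m : ℕ} (hm : 0 < m) :
    ((n + m).choose m : ℝ) ≤ (exp 1 * (n + m) / m) ^ m := by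
  have hm' : (0 : ℝ) < m := by exact_mod_cast hm
  have hfact : (m : ℝ) ^ m / m.factorial ≤ exp 1 ^ m := by
    simpa [← Real.exp_nat_mul, mul_comm] using Real.pow_div_factorial_le_exp (m : ℝ) hm'.le m
  calc ((n + m).choose m : ℝ) ≤ ((n + m : ℕ) : ℝ) ^ m / m.factorial :=
        Nat.choose_le_pow_div m (n + m)
    _ = ((n + m) / m) ^ m * ((m : ℝ) ^ m / m.factorial) := by
        rw [div_pow]; push_cast; field_simp
    _ ≤ ((n + m) / m) ^ m * exp 1 ^ m := by gcongr
    _ = (exp 1 * (n + m) / m) ^ m := by rw [← mul_pow]; ring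

theorem le_of_two_pow_le_sum_choose_pow {n M : ℕ} (hM : 1 ≤ M)
    (h : 2 ^ n ≤ 2 ^ 2 ^ 7 * (∑ i ∈ Finset.range (M + 1), n.choose i) ^ 7) : n ≤ 250 * M := by
  have hM' : (1 : ℝ) ≤ M := by exact_mod_cast hM
  set u : ℝ := (n + M) / M with hu
  have hu_pos : 0 < u := by positivity
  have hMu : M * u = n + M := by rw [hu]; field_simp
  have hsum : ((∑ i ∈ Finset.range (M + 1), n.choose i : ℕ) : ℝ) ≤ (exp 1 * u) ^ M := by
    calc _ ≤ ((n + M).choose M : ℝ) := by exact_mod_cast Nat.sum_range_choose_le_add_choose n M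
      _ ≤ _ := by rw [hu, ← mul_div_assoc]; exact add_choose_le_exp_mul_pow n hM
  have hpow : (2 : ℝ) ^ n ≤ 2 ^ 2 ^ 7 * (exp 1 * u) ^ (7 * M) := by
    calc (2 : ℝ) ^ n ≤ 2 ^ 2 ^ 7 * ((∑ i ∈ Finset.range (M + 1), n.choose i : ℕ) : ℝ) ^ 7 := by
          exact_mod_cast h
      _ ≤ 2 ^ 2 ^ 7 * ((exp 1 * u) ^ M) ^ 7 := by gcongr
      _ = _ := by ring
  have hlog : n * log 2 ≤ 128 * log 2 + 7 * M * (1 + log u) := by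
    have := Real.log_le_log (by positivity) hpow
    rw [Real.log_mul (by positivity) (by positivity), Real.log_pow, Real.log_pow, Real.log_pow,
      Real.log_mul (by positivity) hu_pos.ne', Real.log_exp] at this
    push_cast at this
    linarith
  -- tangent-line bound for `log` at `32 = 2 ^ 5`
  have hlogu : log u ≤ 5 * log 2 + u / 32 - 1 := by
    have := Real.log_le_sub_one_of_pos (show 0 < u / 32 by positivity)
    rw [Real.log_div hu_pos.ne' (by norm_num), show (32 : ℝ) = 2 ^ 5 by norm_num,
      Real.log_pow] at this
    push_cast at this
    linarith
  have hkey : n * log 2 ≤ 128 * log 2 + 35 * M * log 2 + 7 * (n + M) / 32 := by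
    linarith [mul_le_mul_of_nonneg_left hlogu (by positivity : (0 : ℝ) ≤ 7 * M)]
  have hn : (n : ℝ) ≤ 250 * M := by
    nlinarith [Real.log_two_gt_d9, Real.log_two_lt_d9]
  exact_mod_cast hn

end Arithmetic

namespace IsSignPatternFamily

variable {α Θ : Type*} {V : Submodule ℝ (α → ℝ)} {S : Θ → Set α}

theorem card_le [FiniteDimensional ℝ V] (hS : IsSignPatternFamily V 7 S) {Y : Finset α}
    (hY : Shatters (Set.range S) Y) : Y.card ≤ 250 * (finrank ℝ V + 1) := by
  refine le_of_two_pow_le_sum_choose_pow (Nat.le_add_left 1 _) ((hS.two_pow_card_le hY).trans ?_)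
  gcongr
  exact card_traces_le (fun Z hZ => (card_le_finrank_of_shatters_nonnegSets hZ).trans
    (Nat.le_succ _)) Y

theorem card_le_of_finrank_le [FiniteDimensional ℝ V] (hS : IsSignPatternFamily V 7 S) {d : ℕ}
    (hd : 1 ≤ d) (hV : finrank ℝ V ≤ 7 * (d + 1) ^ 2) {R : Set (Set α)} (hR : R ⊆ Set.range S)
    {Y : Finset α} (hY : Shatters R Y) : (Y.card : ℝ) ≤ 7250 * d ^ 2 := by
  have hY' := hS.card_le (hY.mono hR)
  have : Y.card ≤ 7250 * d ^ 2 := by nlinarith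
  exact_mod_cast this

end IsSignPatternFamily

section Line

variable {F : Type*} [NormedAddCommGroup F] [InnerProductSpace ℝ F]

theorem norm_sub_add_smul_sq (s v x : F) (c : ℝ) :
    ‖x - (s + c • v)‖ ^ 2 = ‖x - s‖ ^ 2 - 2 * c * ⟪v, x - s⟫ + c ^ 2 * ‖v‖ ^ 2 := by
  rw [show x - (s + c • v) = (x - s) - c • v by abel, norm_sub_sq_real, real_inner_smul_right,
    norm_smul, mul_pow, Real.norm_eq_abs, sq_abs, real_inner_comm]
  ring

theorem norm_sub_add_smul_sq_mul (s v x : F) (c : ℝ) :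
    ‖x - (s + c • v)‖ ^ 2 * ‖v‖ ^ 2 =
      (‖v‖ ^ 2 * ‖x - s‖ ^ 2 - ⟪v, x - s⟫ ^ 2) + (c * ‖v‖ ^ 2 - ⟪v, x - s⟫) ^ 2 := by
  rw [norm_sub_add_smul_sq]
  ring

theorem inner_sub_add_smul (s v x : F) (c : ℝ) :
    ⟪v, x - (s + c • v)⟫ = ⟪v, x - s⟫ - c * ‖v‖ ^ 2 := by
  rw [show x - (s + c • v) = (x - s) - c • v by abel, inner_sub_right, real_inner_smul_right,
    real_inner_self_eq_norm_sq]

theorem norm_sub_add_div_smul_le_iff {s v x : F} {r : ℝ} (hv : 0 < ‖v‖ ^ 2) (hr : 0 ≤ r) :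
    ‖x - (s + (⟪v, x - s⟫ / ‖v‖ ^ 2) • v)‖ ≤ r ↔
      ‖v‖ ^ 2 * ‖x - s‖ ^ 2 - ⟪v, x - s⟫ ^ 2 ≤ r ^ 2 * ‖v‖ ^ 2 := by
  have h := norm_sub_add_smul_sq_mul s v x (⟪v, x - s⟫ / ‖v‖ ^ 2)
  rw [div_mul_cancel₀ _ hv.ne', sub_self, zero_pow two_ne_zero, add_zero] at h
  rw [← sq_le_sq₀ (norm_nonneg _) hr, ← h, mul_le_mul_iff_left₀ hv]

end Line

section Shapes

variable {d : ℕ} {s t x : EuclideanSpace ℝ (Fin d)} {r : ℝ}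

theorem mem_closedBall_iff_sq {p : EuclideanSpace ℝ (Fin d)} :
    x ∈ Metric.closedBall p r ↔ 0 ≤ r ∧ ‖x - p‖ ^ 2 ≤ r ^ 2 := by
  rw [Metric.mem_closedBall, dist_eq_norm]
  exact ⟨fun h => ⟨(norm_nonneg _).trans h, by gcongr⟩,
    fun ⟨hr, h⟩ => (sq_le_sq₀ (norm_nonneg _) hr).1 h⟩

theorem cylinder_self (s : EuclideanSpace ℝ (Fin d)) (r : ℝ) :
    cylinder s s r = Metric.closedBall s r := by
  ext x
  simp [cylinder, lineThrough, dist_eq_norm]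

theorem cappedCylinder_self (s : EuclideanSpace ℝ (Fin d)) (r : ℝ) :
    cappedCylinder s s r = Metric.closedBall s r := by
  ext x
  simp only [cappedCylinder, segment_same, Set.mem_singleton_iff, sub_self, inner_zero_left,
    Metric.mem_closedBall, dist_eq_norm]
  constructor
  · rintro ⟨_, rfl, u, hu, -, rfl⟩
    simpa using hu
  · exact fun h => ⟨s, rfl, x - s, h, trivial, by abel⟩

theorem stadium_self (s : EuclideanSpace ℝ (Fin d)) (hr : 0 ≤ r) :
    stadium s s r = Metric.closedBall s r := by
  rw [stadium, segment_same, Metric.cthickening_singleton _ hr]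

theorem norm_sub_sq_pos (h : s ≠ t) : 0 < ‖t - s‖ ^ 2 :=
  pow_pos (norm_pos_iff.2 (sub_ne_zero.2 h.symm)) 2

theorem mem_cylinder_iff (h : s ≠ t) :
    x ∈ cylinder s t r ↔
      0 ≤ r ∧ ‖t - s‖ ^ 2 * ‖x - s‖ ^ 2 - ⟪t - s, x - s⟫ ^ 2 ≤ r ^ 2 * ‖t - s‖ ^ 2 := by
  have hL := norm_sub_sq_pos h
  simp only [cylinder, lineThrough, Set.mem_ofPred_eq]
  constructor
  · rintro ⟨_, ⟨c, rfl⟩, hc⟩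
    have hr := (norm_nonneg _).trans hc
    have hsq : ‖x - (s + c • (t - s))‖ ^ 2 ≤ r ^ 2 := by gcongr
    refine ⟨hr, ?_⟩
    nlinarith [norm_sub_add_smul_sq_mul s (t - s) x c, sq_nonneg (c * ‖t - s‖ ^ 2 - ⟪t - s, x - s⟫)]
  · rintro ⟨hr, hq⟩
    exact ⟨_, ⟨_, rfl⟩, (norm_sub_add_div_smul_le_iff hL hr).2 hq⟩

theorem mem_cappedCylinder_iff (h : s ≠ t) :
    x ∈ cappedCylinder s t r ↔ 0 ≤ r ∧ 0 ≤ ⟪t - s, x - s⟫ ∧ ⟪t - s, x - s⟫ ≤ ‖t - s‖ ^ 2 ∧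
      ‖t - s‖ ^ 2 * ‖x - s‖ ^ 2 - ⟪t - s, x - s⟫ ^ 2 ≤ r ^ 2 * ‖t - s‖ ^ 2 := by
  have hL := norm_sub_sq_pos h
  simp only [cappedCylinder, segment_eq_image', Set.mem_image, Set.mem_ofPred_eq]
  constructor
  · rintro ⟨_, ⟨c, ⟨hc0, hc1⟩, rfl⟩, u, hu, hperp, hx⟩
    have hxu : x - (s + c • (t - s)) = u := by rw [hx]; abel
    have ha := inner_sub_add_smul s (t - s) x c
    have hq := norm_sub_add_smul_sq_mul s (t - s) x c
    rw [hxu, hperp] at ha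
    rw [hxu] at hq
    have hr := (norm_nonneg _).trans hu
    have hsq : ‖u‖ ^ 2 ≤ r ^ 2 := by gcongr
    refine ⟨hr, by nlinarith, by nlinarith, by nlinarith⟩
  · rintro ⟨hr, ha0, haL, hq⟩
    refine ⟨_, ⟨⟪t - s, x - s⟫ / ‖t - s‖ ^ 2, ⟨div_nonneg ha0 hL.le, (div_le_one hL).2 haL⟩, rfl⟩,
      _, (norm_sub_add_div_smul_le_iff hL hr).2 hq, ?_, by abel⟩
    rw [inner_sub_add_smul, div_mul_cancel₀ _ hL.ne', sub_self]

theorem mem_stadium_iff (h : s ≠ t) (hr : 0 ≤ r) :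
    x ∈ stadium s t r ↔ ‖x - s‖ ^ 2 ≤ r ^ 2 ∨ ‖x - t‖ ^ 2 ≤ r ^ 2 ∨
      (0 ≤ ⟪t - s, x - s⟫ ∧ ⟪t - s, x - s⟫ ≤ ‖t - s‖ ^ 2 ∧
        ‖t - s‖ ^ 2 * ‖x - s‖ ^ 2 - ⟪t - s, x - s⟫ ^ 2 ≤ r ^ 2 * ‖t - s‖ ^ 2) := by
  have hL := norm_sub_sq_pos h
  have hxt := norm_sub_add_smul_sq s (t - s) x 1
  rw [one_smul, add_sub_cancel] at hxt
  have hsq {y : EuclideanSpace ℝ (Fin d)} : ‖y‖ ≤ r ↔ ‖y‖ ^ 2 ≤ r ^ 2 :=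
    (sq_le_sq₀ (norm_nonneg _) hr).symm
  have hseg : IsCompact (segment ℝ s t) := by
    rw [← convexHull_pair (𝕜 := ℝ)]
    exact (Set.toFinite _).isCompact_convexHull ℝ
  rw [stadium, hseg.cthickening_eq_biUnion_closedBall hr]
  simp only [Set.mem_iUnion₂, Metric.mem_closedBall, dist_eq_norm, segment_eq_image',
    Set.mem_image, exists_prop, exists_exists_and_eq_and]
  constructor
  · rintro ⟨c, ⟨hc0, hc1⟩, hc⟩
    have hc2 := hsq.1 hc
    rw [norm_sub_add_smul_sq] at hc2
    by_cases ha0 : ⟪t - s, x - s⟫ < 0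
    · left
      nlinarith [mul_nonneg hc0 (neg_nonneg.2 ha0.le), mul_nonneg (mul_nonneg hc0 hc0) hL.le]
    by_cases haL : ‖t - s‖ ^ 2 < ⟪t - s, x - s⟫
    · right; left
      nlinarith [mul_nonneg (sub_nonneg.2 hc1)
        (by nlinarith : (0 : ℝ) ≤ 2 * ⟪t - s, x - s⟫ - ‖t - s‖ ^ 2 * (1 + c))]
    right; right
    refine ⟨not_lt.1 ha0, not_lt.1 haL, ?_⟩
    nlinarith [norm_sub_add_smul_sq_mul s (t - s) x c, norm_sub_add_smul_sq s (t - s) x c,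
      sq_nonneg (c * ‖t - s‖ ^ 2 - ⟪t - s, x - s⟫)]
  · rintro (hq | hq | ⟨ha0, haL, hq⟩)
    · exact ⟨0, ⟨le_rfl, zero_le_one⟩, hsq.2 (by simpa using hq)⟩
    · exact ⟨1, ⟨zero_le_one, le_rfl⟩, hsq.2 (by simpa using hq)⟩
    · exact ⟨_, ⟨div_nonneg ha0 hL.le, (div_le_one hL).2 haL⟩,
        (norm_sub_add_div_smul_le_iff hL hr).2 hq⟩

end Shapes

section Quadratic

variable {d : ℕ}

local notation "E" => EuclideanSpace ℝ (Fin d)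

def affineMonomial : Option (Fin d) → E → ℝ
  | none => 1
  | some i => fun x => x i

variable (d) in
def affineFunctions : Submodule ℝ (E → ℝ) := span ℝ (Set.range affineMonomial)

variable (d) in
def quadraticFunctions : Submodule ℝ (E → ℝ) := affineFunctions d * affineFunctions d

def quadraticMonomial (p : Option (Fin d) × Option (Fin d)) : E → ℝ :=
  affineMonomial p.1 * affineMonomial p.2

theorem quadraticFunctions_le_span :
    quadraticFunctions d ≤ span ℝ (Set.range quadraticMonomial) := by
  rw [quadraticFunctions, affineFunctions, span_mul_span]
  exact span_mono (by rintro _ ⟨_, ⟨i, rfl⟩, _, ⟨j, rfl⟩, rfl⟩; exact ⟨(i, j), rfl⟩)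

instance : FiniteDimensional ℝ (span ℝ (Set.range (quadraticMonomial (d := d)))) :=
  FiniteDimensional.span_of_finite ℝ (Set.finite_range _)

instance : FiniteDimensional ℝ (quadraticFunctions d) :=
  Submodule.finiteDimensional_of_le quadraticFunctions_le_span

theorem finrank_quadraticFunctions_le : finrank ℝ (quadraticFunctions d) ≤ (d + 1) ^ 2 :=
  (Submodule.finrank_mono quadraticFunctions_le_span).trans
    ((finrank_range_le_card _).trans (by simp [sq]))

theorem one_mem_affineFunctions : (1 : E → ℝ) ∈ affineFunctions d :=
  subset_span ⟨none, rfl⟩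

theorem const_mem_affineFunctions (c : ℝ) : (fun _ : E => c) ∈ affineFunctions d := by
  convert smul_mem _ c (one_mem_affineFunctions (d := d)) using 1
  ext; simp

theorem inner_sub_mem_affineFunctions (v s : E) :
    (fun x : E => ⟪v, x - s⟫) ∈ affineFunctions d := by
  have : (fun x : E => ⟪v, x - s⟫) = ∑ i, v i • affineMonomial (some i) - fun _ => ⟪v, s⟫ := by
    ext x
    simp [affineMonomial, inner_sub_right, PiLp.inner_apply, mul_comm]
  rw [this]
  exact sub_mem (sum_mem fun i _ => smul_mem _ _ (subset_span ⟨some i, rfl⟩))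
    (const_mem_affineFunctions _)

theorem affineFunctions_le_quadraticFunctions : affineFunctions d ≤ quadraticFunctions d :=
  fun f hf => mul_one f ▸ mul_mem_mul hf one_mem_affineFunctions

theorem norm_sub_sq_mem_quadraticFunctions (s : E) :
    (fun x : E => ‖x - s‖ ^ 2) ∈ quadraticFunctions d := by
  have : (fun x : E => ‖x - s‖ ^ 2) =
      ∑ i, (fun x : E => x i - s i) * (fun x : E => x i - s i) := by
    ext x
    rw [EuclideanSpace.norm_sq_eq]
    simp [sq]
  rw [this]
  refine sum_mem fun i _ => mul_mem_mul ?_ ?_ <;>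
  · exact sub_mem (subset_span ⟨some i, rfl⟩) (const_mem_affineFunctions _)

/-- The signs of these seven quadratic functions of `x` decide membership of `x` in each of the
shapes with parameters `s`, `t`, `r`. -/
noncomputable def shapeAtoms (s t : E) (r : ℝ) : Fin 7 → E → ℝ :=
  ![fun _ => r, fun _ => -‖t - s‖ ^ 2, fun x => r ^ 2 - ‖x - s‖ ^ 2, fun x => r ^ 2 - ‖x - t‖ ^ 2,
    fun x => ⟪t - s, x - s⟫, fun x => ‖t - s‖ ^ 2 - ⟪t - s, x - s⟫,
    fun x => r ^ 2 * ‖t - s‖ ^ 2 - (‖t - s‖ ^ 2 * ‖x - s‖ ^ 2 - ⟪t - s, x - s⟫ * ⟪t - s, x - s⟫)]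

theorem shapeAtoms_mem_quadraticFunctions (s t : E) (r : ℝ) (i : Fin 7) :
    shapeAtoms s t r i ∈ quadraticFunctions d := by
  have hc (c : ℝ) := affineFunctions_le_quadraticFunctions (const_mem_affineFunctions (d := d) c)
  have ha := inner_sub_mem_affineFunctions (t - s) s
  fin_cases i
  exacts [hc r, hc _, sub_mem (hc _) (norm_sub_sq_mem_quadraticFunctions s),
    sub_mem (hc _) (norm_sub_sq_mem_quadraticFunctions t), affineFunctions_le_quadraticFunctions ha,
    sub_mem (hc _) (affineFunctions_le_quadraticFunctions ha),
    sub_mem (hc _)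
      (sub_mem (smul_mem _ _ (norm_sub_sq_mem_quadraticFunctions s)) (mul_mem_mul ha ha))]

theorem isSignPatternFamily_closedBall :
    IsSignPatternFamily (quadraticFunctions d) 7 fun θ : E × ℝ => Metric.closedBall θ.1 θ.2 := by
  refine ⟨fun b => b 0 && b 2, fun θ => shapeAtoms θ.1 θ.1 θ.2,
    fun θ => shapeAtoms_mem_quadraticFunctions _ _ _, fun ⟨p, r⟩ x => ?_⟩
  rw [mem_closedBall_iff_sq]
  simp [shapeAtoms, ← sq]

theorem isSignPatternFamily_cylinder :
    IsSignPatternFamily (quadraticFunctions d) 7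
      fun θ : (E × E) × ℝ => cylinder θ.1.1 θ.1.2 θ.2 := by
  refine ⟨fun b => b 0 && (b 1 && b 2 || !b 1 && b 6), fun θ => shapeAtoms θ.1.1 θ.1.2 θ.2,
    fun θ => shapeAtoms_mem_quadraticFunctions _ _ _, fun ⟨⟨s, t⟩, r⟩ x => ?_⟩
  beta_reduce
  rcases eq_or_ne s t with rfl | h
  · rw [cylinder_self, mem_closedBall_iff_sq]
    simp [shapeAtoms, ← sq]
  · rw [mem_cylinder_iff h]
    simp [shapeAtoms, ← sq, (norm_sub_sq_pos h).not_ge]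

theorem isSignPatternFamily_cappedCylinder :
    IsSignPatternFamily (quadraticFunctions d) 7
      fun θ : (E × E) × ℝ => cappedCylinder θ.1.1 θ.1.2 θ.2 := by
  refine ⟨fun b => b 0 && (b 1 && b 2 || !b 1 && b 4 && b 5 && b 6),
    fun θ => shapeAtoms θ.1.1 θ.1.2 θ.2,
    fun θ => shapeAtoms_mem_quadraticFunctions _ _ _, fun ⟨⟨s, t⟩, r⟩ x => ?_⟩
  beta_reduce
  rcases eq_or_ne s t with rfl | h
  · rw [cappedCylinder_self, mem_closedBall_iff_sq]
    simp [shapeAtoms, ← sq]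
  · rw [mem_cappedCylinder_iff h]
    simp [shapeAtoms, ← sq, (norm_sub_sq_pos h).not_ge, and_assoc]

theorem isSignPatternFamily_stadium :
    IsSignPatternFamily (quadraticFunctions d) 7
      fun θ : (E × E) × ℝ => stadium θ.1.1 θ.1.2 θ.2 := by
  refine ⟨fun b => b 2 || b 3 || !b 1 && b 4 && b 5 && b 6,
    fun θ => shapeAtoms θ.1.1 θ.1.2 (max 0 θ.2),
    fun θ => shapeAtoms_mem_quadraticFunctions _ _ _, fun ⟨⟨s, t⟩, r⟩ x => ?_⟩
  change x ∈ Metric.cthickening r _ ↔ _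
  -- a negative radius thickens the segment to itself, exactly as the radius `0` does
  rw [← Metric.cthickening_max_zero]
  rcases eq_or_ne s t with rfl | h
  · rw [← stadium, stadium_self s (le_max_left 0 r), mem_closedBall_iff_sq]
    simp [shapeAtoms, ← sq]
  · rw [← stadium, mem_stadium_iff h (le_max_left 0 r)]
    simp [shapeAtoms, ← sq, (norm_sub_sq_pos h).not_ge, and_assoc, or_assoc]

end Quadratic

section VCBound

variable {d : ℕ} {Θ : Type*} {S : Θ → Set (EuclideanSpace ℝ (Fin d))}

theorem card_le_of_shatters_primal (hS : IsSignPatternFamily (quadraticFunctions d) 7 S)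
    (hd : 1 ≤ d) {R : Set (Set (EuclideanSpace ℝ (Fin d)))} (hR : R ⊆ Set.range S)
    {Y : Finset (EuclideanSpace ℝ (Fin d))} (hY : Shatters R Y) : (Y.card : ℝ) ≤ 7250 * d ^ 2 :=
  hS.card_le_of_finrank_le hd (finrank_quadraticFunctions_le.trans (by omega)) hR hY

theorem card_le_of_shatters_dual (hS : IsSignPatternFamily (quadraticFunctions d) 7 S)
    (hd : 1 ≤ d) {Y : Finset Θ} (hY : Shatters {B | ∃ x, B = {θ | x ∈ S θ}} Y) :
    (Y.card : ℝ) ≤ 7250 * d ^ 2 := by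
  obtain ⟨V, _, hV, hS'⟩ := hS.dual
  exact hS'.card_le_of_finrank_le hd (hV.trans (by gcongr; exact finrank_quadraticFunctions_le))
    (by rintro _ ⟨x, rfl⟩; exact ⟨x, rfl⟩) hY

end VCBound

/-- Each of the range spaces on `ℝ^d` given by closed balls, stadiums, cylinders, and
capped cylinders has VC dimension `O(d²)`, and the same bound holds for each dual
range space (on the parameter tuples defining the shapes, with ranges indexed by the
points of `ℝ^d` they contain). -/
theorem vc_basic_shapes :
    ∃ C : ℝ, 0 < C ∧ ∀ d : ℕ, 1 ≤ d →
      (∀ Y : Finset (EuclideanSpace ℝ (Fin d)),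
        Shatters {B | ∃ (p : EuclideanSpace ℝ (Fin d)) (r : ℝ), 0 < r ∧
            B = Metric.closedBall p r} Y →
        (Y.card : ℝ) ≤ C * d ^ 2) ∧
      (∀ Y : Finset (EuclideanSpace ℝ (Fin d)),
        Shatters {B | ∃ (s t : EuclideanSpace ℝ (Fin d)) (r : ℝ), s ≠ t ∧ 0 < r ∧
            B = stadium s t r} Y →
        (Y.card : ℝ) ≤ C * d ^ 2) ∧
      (∀ Y : Finset (EuclideanSpace ℝ (Fin d)),
        Shatters {B | ∃ (s t : EuclideanSpace ℝ (Fin d)) (r : ℝ), s ≠ t ∧ 0 < r ∧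
            B = cylinder s t r} Y →
        (Y.card : ℝ) ≤ C * d ^ 2) ∧
      (∀ Y : Finset (EuclideanSpace ℝ (Fin d)),
        Shatters {B | ∃ (s t : EuclideanSpace ℝ (Fin d)) (r : ℝ), s ≠ t ∧ 0 < r ∧
            B = cappedCylinder s t r} Y →
        (Y.card : ℝ) ≤ C * d ^ 2) ∧
      (∀ Y : Finset ((EuclideanSpace ℝ (Fin d)) × ℝ),
        Shatters {B | ∃ x : EuclideanSpace ℝ (Fin d),
            B = {pr | x ∈ Metric.closedBall pr.1 pr.2}} Y →
        (Y.card : ℝ) ≤ C * d ^ 2) ∧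
      (∀ Y : Finset (((EuclideanSpace ℝ (Fin d)) × (EuclideanSpace ℝ (Fin d))) × ℝ),
        Shatters {B | ∃ x : EuclideanSpace ℝ (Fin d),
            B = {str | x ∈ stadium str.1.1 str.1.2 str.2}} Y →
        (Y.card : ℝ) ≤ C * d ^ 2) ∧
      (∀ Y : Finset (((EuclideanSpace ℝ (Fin d)) × (EuclideanSpace ℝ (Fin d))) × ℝ),
        Shatters {B | ∃ x : EuclideanSpace ℝ (Fin d),
            B = {str | x ∈ cylinder str.1.1 str.1.2 str.2}} Y →
        (Y.card : ℝ) ≤ C * d ^ 2) ∧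
      (∀ Y : Finset (((EuclideanSpace ℝ (Fin d)) × (EuclideanSpace ℝ (Fin d))) × ℝ),
        Shatters {B | ∃ x : EuclideanSpace ℝ (Fin d),
            B = {str | x ∈ cappedCylinder str.1.1 str.1.2 str.2}} Y →
        (Y.card : ℝ) ≤ C * d ^ 2) := by
  refine ⟨7250, by norm_num, fun d hd => ⟨?_, ?_, ?_, ?_, ?_, ?_, ?_, ?_⟩⟩
  · exact fun Y => card_le_of_shatters_primal isSignPatternFamily_closedBall hd
      (by rintro _ ⟨p, r, -, rfl⟩; exact ⟨(p, r), rfl⟩)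
  · exact fun Y => card_le_of_shatters_primal isSignPatternFamily_stadium hd
      (by rintro _ ⟨s, t, r, -, -, rfl⟩; exact ⟨((s, t), r), rfl⟩)
  · exact fun Y => card_le_of_shatters_primal isSignPatternFamily_cylinder hd
      (by rintro _ ⟨s, t, r, -, -, rfl⟩; exact ⟨((s, t), r), rfl⟩)
  · exact fun Y => card_le_of_shatters_primal isSignPatternFamily_cappedCylinder hd
      (by rintro _ ⟨s, t, r, -, -, rfl⟩; exact ⟨((s, t), r), rfl⟩)
  · exact fun Y => card_le_of_shatters_dual isSignPatternFamily_closedBall hd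
  · exact fun Y => card_le_of_shatters_dual isSignPatternFamily_stadium hd
  · exact fun Y => card_le_of_shatters_dual isSignPatternFamily_cylinder hd
  · exact fun Y => card_le_of_shatters_dual isSignPatternFamily_cappedCylinder hd
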